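/- For every n ≥ 1, the maximally balanced tree T^mb_n satisfies Δ_CS(T^mb_n) = d_n, where d_n is the minimum of Δ_CS = C - S over all rooted binary trees with n leaves. -/

import Mathlib

/-- Rooted binary trees: a leaf, or an internal vertex with two child subtrees. -/
inductive BTree where
  | leaf : BTree
  | node : BTree → BTree → BTree
deriving DecidableEq

namespace BTree

/-- Number of leaves of a rooted binary tree. -/
def numLeaves : BTree → ℕ
  | leaf => 1
  | node l r => numLeaves l + numLeaves r

/-- Sackin index: sum over internal vertices `v` of `n_{v_a} + n_{v_b}`. -/
def sackin : BTree → ℕ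
  | leaf => 0
  | node l r => sackin l + sackin r + (numLeaves l + numLeaves r)

/-- Colless index: sum over internal vertices `v` of `|n_{v_a} - n_{v_b}|`. -/
def colless : BTree → ℕ
  | leaf => 0
  | node l r =>
      colless l + colless r +
        (max (numLeaves l) (numLeaves r) - min (numLeaves l) (numLeaves r))

/-- `N_a`: sum over internal vertices of the larger child-subtree leaf count. -/
def Na : BTree → ℕ
  | leaf => 0
  | node l r => Na l + Na r + max (numLeaves l) (numLeaves r)

/-- `N_b`: sum over internal vertices of the smaller child-subtree leaf count. -/
def Nb : BTree → ℕ
  | leaf => 0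
  | node l r => Nb l + Nb r + min (numLeaves l) (numLeaves r)

/-- `Δ_CS = C - S`, as an integer. -/
def deltaCS (T : BTree) : ℤ := (colless T : ℤ) - (sackin T : ℤ)

/-- Caterpillar trees: every internal vertex has at least one leaf child. -/
def isCaterpillar : BTree → Prop
  | leaf => True
  | node l r => (l = leaf ∧ isCaterpillar r) ∨ (r = leaf ∧ isCaterpillar l)

/-- The fully balanced tree of height `h`. -/
def fbTree : ℕ → BTree
  | 0 => leaf
  | h + 1 => node (fbTree h) (fbTree h)

end BTree

namespace BTree

/-- The maximally balanced tree `T^mb_n`: `T^mb_n = (T^mb_{⌈n/2⌉}, T^mb_{⌊n/2⌋})`. -/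
def mbTree : ℕ → BTree
  | 0 => leaf
  | 1 => leaf
  | n + 2 => node (mbTree ((n + 3) / 2)) (mbTree ((n + 2) / 2))
decreasing_by all_goals omega

end BTree

/-!
Since `colless T + 2 * Nb T = sackin T`, minimising `Δ_CS = -2 Nb` means maximising `Nb`.
Writing `m n = Nb (T^mb_n)`, the maximally balanced tree satisfies `m (2k) = 2 m k + k` and
`m (2k+1) = m (k+1) + m k + k`, from which a halving induction gives the superadditivity
`m a + m b + min a b ≤ m (a + b)`. Structural induction on `T = (T_a, T_b)` then bounds
`Nb T ≤ m (numLeaves T)`.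
-/

namespace BTree

theorem colless_add_two_mul_Nb (T : BTree) : colless T + 2 * Nb T = sackin T := by
  induction T with
  | leaf => rfl
  | node l r hl hr =>
    simp only [colless, Nb, sackin]
    have := max_add_min (numLeaves l) (numLeaves r)
    have := min_le_max (a := numLeaves l) (b := numLeaves r)
    omega

theorem deltaCS_eq_neg_two_mul_Nb (T : BTree) : deltaCS T = -2 * (Nb T : ℤ) := by
  have := colless_add_two_mul_Nb T
  unfold deltaCS
  omega

theorem numLeaves_mbTree (n : ℕ) : numLeaves (mbTree n) = max n 1 := by
  induction n using Nat.strong_induction_on with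
  | _ n ih =>
    match n with
    | 0 | 1 => rw [mbTree]; rfl
    | n + 2 =>
      rw [mbTree, numLeaves, ih _ (by omega), ih _ (by omega)]
      omega

theorem Nb_mbTree_zero : Nb (mbTree 0) = 0 := by
  rw [mbTree]; rfl

theorem Nb_mbTree_add_two (n : ℕ) :
    Nb (mbTree (n + 2)) = Nb (mbTree ((n + 3) / 2)) + Nb (mbTree ((n + 2) / 2)) + (n + 2) / 2 := by
  rw [mbTree, Nb, numLeaves_mbTree, numLeaves_mbTree]
  congr 1
  omega

theorem Nb_mbTree_two_mul (k : ℕ) : Nb (mbTree (2 * k)) = 2 * Nb (mbTree k) + k := by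
  cases k with
  | zero => simp [Nb_mbTree_zero]
  | succ j =>
    rw [show 2 * (j + 1) = 2 * j + 2 by ring, Nb_mbTree_add_two,
      show (2 * j + 3) / 2 = j + 1 by omega, show (2 * j + 2) / 2 = j + 1 by omega]
    ring

theorem Nb_mbTree_two_mul_add_one (k : ℕ) :
    Nb (mbTree (2 * k + 1)) = Nb (mbTree (k + 1)) + Nb (mbTree k) + k := by
  cases k with
  | zero => simp [Nb_mbTree_zero]
  | succ j =>
    rw [show 2 * (j + 1) + 1 = 2 * j + 1 + 2 by ring, Nb_mbTree_add_two,
      show (2 * j + 1 + 3) / 2 = j + 2 by omega, show (2 * j + 1 + 2) / 2 = j + 1 by omega]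

/-- The two halves of `a + b` can each be written as a half of `a` plus a half of `b`; the
induction hypotheses for these two sums add up to the claim. -/
theorem Nb_mbTree_add_le (a b : ℕ) :
    Nb (mbTree a) + Nb (mbTree b) + min a b ≤ Nb (mbTree (a + b)) := by
  obtain ⟨s, hs⟩ : ∃ s, a + b = s := ⟨_, rfl⟩
  rw [hs]
  induction s using Nat.strong_induction_on generalizing a b with
  | _ s ih =>
    rcases Nat.lt_or_ge s 2 with hs2 | hs2
    · obtain rfl | rfl : a = 0 ∨ b = 0 := by omega
      all_goals simp [← hs, Nb_mbTree_zero]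
    obtain ⟨α, rfl | rfl⟩ := Nat.even_or_odd' a <;> obtain ⟨β, rfl | rfl⟩ := Nat.even_or_odd' b
    · have := ih (α + β) (by omega) α β rfl
      rw [← hs, show 2 * α + 2 * β = 2 * (α + β) by ring, Nb_mbTree_two_mul, Nb_mbTree_two_mul,
        Nb_mbTree_two_mul]
      omega
    · have := ih (α + β + 1) (by omega) α (β + 1) (by ring)
      have := ih (α + β) (by omega) α β rfl
      rw [← hs, show 2 * α + (2 * β + 1) = 2 * (α + β) + 1 by ring, Nb_mbTree_two_mul,
        Nb_mbTree_two_mul_add_one, Nb_mbTree_two_mul_add_one]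
      omega
    · have := ih (α + β + 1) (by omega) (α + 1) β (by ring)
      have := ih (α + β) (by omega) α β rfl
      rw [← hs, show 2 * α + 1 + 2 * β = 2 * (α + β) + 1 by ring, Nb_mbTree_two_mul,
        Nb_mbTree_two_mul_add_one, Nb_mbTree_two_mul_add_one]
      omega
    · have := ih (α + β + 1) (by omega) (α + 1) β (by ring)
      have := ih (α + β + 1) (by omega) α (β + 1) (by ring)
      rw [← hs, show 2 * α + 1 + (2 * β + 1) = 2 * (α + β + 1) by ring, Nb_mbTree_two_mul,
        Nb_mbTree_two_mul_add_one, Nb_mbTree_two_mul_add_one]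
      omega

theorem Nb_le_Nb_mbTree_numLeaves (T : BTree) : Nb T ≤ Nb (mbTree (numLeaves T)) := by
  induction T with
  | leaf => exact Nat.zero_le _
  | node l r hl hr =>
    have := Nb_mbTree_add_le (numLeaves l) (numLeaves r)
    simp only [Nb, numLeaves]
    omega

theorem deltaCS_mbTree_numLeaves_le (T : BTree) : deltaCS (mbTree (numLeaves T)) ≤ deltaCS T := by
  have := Nb_le_Nb_mbTree_numLeaves T
  rw [deltaCS_eq_neg_two_mul_Nb, deltaCS_eq_neg_two_mul_Nb]
  omega

end BTree

open BTree in
/-- `Δ_CS(T^mb_n) = d_n`, i.e. the maximally balanced tree attains the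
minimum of `Δ_CS` among all rooted binary trees with `n` leaves. -/
theorem mbTree_minimizes_deltaCS (n : ℕ) (hn : 1 ≤ n) :
    IsLeast {x : ℤ | ∃ T : BTree, numLeaves T = n ∧ deltaCS T = x}
      (deltaCS (mbTree n)) := by
  refine ⟨⟨mbTree n, by rw [numLeaves_mbTree]; omega, rfl⟩, ?_⟩
  rintro _ ⟨T, rfl, rfl⟩
  exact deltaCS_mbTree_numLeaves_le T
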